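/- Suppose there exists an arm a ≠ a* with X_{a*} x = 0, X_a x = 0, and α_{a*}‖x‖_{V_{a*}⁻¹} < ε + α_a‖x‖_{V_a⁻¹}. Then for all perturbations Δ_{a*} ∈ ℝ^{m_{a*}} and Δ_a ∈ ℝ^{m_a}, xᵀθ̂_{a*}(Δ_{a*}) + α_{a*}‖x‖_{V_{a*}⁻¹} < ε + xᵀθ̂_a(Δ_a) + α_a‖x‖_{V_a⁻¹}; in particular, x cannot be ε-strongly attacked into pulling a*. -/
import Mathlib


open Matrix

/-- The regularized Gram matrix `V = XᵀX + λI`. -/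
noncomputable def Vmat {m d : ℕ} (lam : ℝ) (X : Matrix (Fin m) (Fin d) ℝ) :
    Matrix (Fin d) (Fin d) ℝ :=
  Xᵀ * X + lam • (1 : Matrix (Fin d) (Fin d) ℝ)

/-- The Mahalanobis norm `‖x‖_{V⁻¹} = √(xᵀ V⁻¹ x)`. -/
noncomputable def mahNorm {d : ℕ} (V : Matrix (Fin d) (Fin d) ℝ) (x : Fin d → ℝ) : ℝ :=
  Real.sqrt (x ⬝ᵥ (V⁻¹ *ᵥ x))

/-- The post-attack ridge regression estimate `θ̂ = V⁻¹ Xᵀ (y + Δ)`. -/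
noncomputable def thetaHat {m d : ℕ} (lam : ℝ) (X : Matrix (Fin m) (Fin d) ℝ)
    (y Δ : Fin m → ℝ) : Fin d → ℝ :=
  (Vmat lam X)⁻¹ *ᵥ (Xᵀ *ᵥ (y + Δ))

/-- The post-attack UCB index of arm `a` at context `x`:
`xᵀ θ̂_a(Δ_a) + α_a ‖x‖_{V_a⁻¹}`. -/
noncomputable def ucbIndex {K d : ℕ} (lam : ℝ) (m : Fin K → ℕ)
    (X : ∀ a, Matrix (Fin (m a)) (Fin d) ℝ) (y : ∀ a, Fin (m a) → ℝ)
    (α : Fin K → ℝ) (Δ : ∀ a, Fin (m a) → ℝ) (x : Fin d → ℝ) (a : Fin K) : ℝ :=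
  x ⬝ᵥ thetaHat lam (X a) (y a) (Δ a) + α a * mahNorm (Vmat lam (X a)) x

/-- The perturbation family `Δ` ε-strongly attacks context `x` into pulling arm `astar`. -/
def StronglyAttacks {K d : ℕ} (lam : ℝ) (m : Fin K → ℕ)
    (X : ∀ a, Matrix (Fin (m a)) (Fin d) ℝ) (y : ∀ a, Fin (m a) → ℝ)
    (α : Fin K → ℝ) (astar : Fin K) (ε : ℝ)
    (Δ : ∀ a, Fin (m a) → ℝ) (x : Fin d → ℝ) : Prop :=
  ∀ a : Fin K, a ≠ astar →
    ucbIndex lam m X y α Δ x astar ≥ ε + ucbIndex lam m X y α Δ x a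

/-- The perturbation family `Δ` weakly attacks context `x` into pulling arm `astar`. -/
def WeaklyAttacks {K d : ℕ} (lam : ℝ) (m : Fin K → ℕ)
    (X : ∀ a, Matrix (Fin (m a)) (Fin d) ℝ) (y : ∀ a, Fin (m a) → ℝ)
    (α : Fin K → ℝ) (astar : Fin K)
    (Δ : ∀ a, Fin (m a) → ℝ) (x : Fin d → ℝ) : Prop :=
  ∀ a : Fin K, a ≠ astar →
    ucbIndex lam m X y α Δ x astar > ucbIndex lam m X y α Δ x a


lemma Vmat_posDef {m d : ℕ} {lam : ℝ} (hlam : 0 < lam) (X : Matrix (Fin m) (Fin d) ℝ) :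
    (Vmat lam X).PosDef := by
  have h1 : (Xᵀ * X).PosSemidef := by
    have := Matrix.posSemidef_conjTranspose_mul_self X
    simpa using this
  have h2 : (lam • (1 : Matrix (Fin d) (Fin d) ℝ)).PosDef := by
    have : (lam • (1 : Matrix (Fin d) (Fin d) ℝ)) = Matrix.diagonal (fun _ => lam) := by
      simp [Matrix.smul_eq_diagonal_mul]
    rw [this]
    exact Matrix.PosDef.diagonal (fun _ => hlam)
  exact Matrix.PosDef.posSemidef_add h1 h2

lemma Vmat_inv_mulVec {m d : ℕ} {lam : ℝ} (hlam : 0 < lam) (X : Matrix (Fin m) (Fin d) ℝ)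
    {x : Fin d → ℝ} (hx : X *ᵥ x = 0) : (Vmat lam X)⁻¹ *ᵥ x = lam⁻¹ • x := by
  haveI := (Vmat_posDef hlam X).isUnit.invertible
  apply Matrix.inv_mulVec_eq_vec
  rw [Vmat, Matrix.add_mulVec, Matrix.mulVec_smul,  ← Matrix.mulVec_mulVec, hx]
  simp [Matrix.smul_mulVec, Matrix.one_mulVec, smul_smul, mul_inv_cancel₀ hlam.ne']

lemma dot_thetaHat_eq_zero {m d : ℕ} {lam : ℝ} (hlam : 0 < lam)
    (X : Matrix (Fin m) (Fin d) ℝ) (y Δ : Fin m → ℝ) {x : Fin d → ℝ}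
    (hx : X *ᵥ x = 0) : x ⬝ᵥ thetaHat lam X y Δ = 0 := by
  have hsymm : (Vmat lam X)ᵀ = Vmat lam X := by
    simp [Vmat, Matrix.transpose_add, Matrix.transpose_mul, Matrix.transpose_smul]
  rw [thetaHat, Matrix.dotProduct_mulVec]
  have : x ᵥ* (Vmat lam X)⁻¹ = lam⁻¹ • x := by
    rw [← hsymm, ← Matrix.transpose_nonsing_inv, Matrix.vecMul_transpose,
      Vmat_inv_mulVec hlam X hx]
  rw [this, smul_dotProduct, Matrix.dotProduct_mulVec, Matrix.vecMul_transpose, hx]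
  simp

/-- Sufficiency direction of Theorem 1: if some non-target arm `a` satisfies
`X_{a*}x = 0`, `X_a x = 0` and `α_{a*}‖x‖_{V_{a*}⁻¹} < ε + α_a‖x‖_{V_a⁻¹}`, then no
perturbations can make the UCB of `a*` exceed that of `a` by `ε`; in particular `x`
cannot be ε-strongly attacked. -/
theorem cannot_attack_of_null_and_small_bonus {K d : ℕ} (hK : 2 ≤ K) (hd : 1 ≤ d)
    (lam : ℝ) (hlam : 0 < lam) (m : Fin K → ℕ)
    (X : ∀ a, Matrix (Fin (m a)) (Fin d) ℝ) (y : ∀ a, Fin (m a) → ℝ)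
    (α : Fin K → ℝ) (astar : Fin K) (ε : ℝ) (hε : 0 < ε) (x : Fin d → ℝ)
    (a : Fin K) (ha : a ≠ astar)
    (h1 : X astar *ᵥ x = 0) (h2 : X a *ᵥ x = 0)
    (h3 : α astar * mahNorm (Vmat lam (X astar)) x
        < ε + α a * mahNorm (Vmat lam (X a)) x) :
    (∀ (Δstar : Fin (m astar) → ℝ) (Δa : Fin (m a) → ℝ),
        x ⬝ᵥ thetaHat lam (X astar) (y astar) Δstar
            + α astar * mahNorm (Vmat lam (X astar)) x
          < ε + x ⬝ᵥ thetaHat lam (X a) (y a) Δa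
            + α a * mahNorm (Vmat lam (X a)) x) ∧
      ¬ ∃ Δ : ∀ b, Fin (m b) → ℝ, StronglyAttacks lam m X y α astar ε Δ x := by
  have key : ∀ (Δstar : Fin (m astar) → ℝ) (Δa : Fin (m a) → ℝ),
      x ⬝ᵥ thetaHat lam (X astar) (y astar) Δstar
          + α astar * mahNorm (Vmat lam (X astar)) x
        < ε + x ⬝ᵥ thetaHat lam (X a) (y a) Δa
          + α a * mahNorm (Vmat lam (X a)) x := by
    intro Δstar Δa
    rw [dot_thetaHat_eq_zero hlam (X astar) (y astar) Δstar h1,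
      dot_thetaHat_eq_zero hlam (X a) (y a) Δa h2]
    linarith
  refine ⟨key, ?_⟩
  rintro ⟨Δ, hΔ⟩
  have h := hΔ a ha
  have h' := key (Δ astar) (Δ a)
  simp only [ucbIndex, ge_iff_le] at h
  linarith
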